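/- arXiv:2112.14788 — 2 statements merged into one kernel-verified Lean document; each statement's English description precedes it below -/
import Mathlib

section
/- Let m ≥ 2 and let λ : ℝ^{2m} → ℝ be a function such that λ(ζ₁ + ζ₂) = λ(ζ₁) + λ(ζ₂) for all ζ₁, ζ₂ ∈ ℝ^{2m} satisfying [ζ₁, ζ₂] = 0, where [u,v] = uᵀωv is the standard symplectic form. Then λ is additive on all pairs of vectors: λ(u + v) = λ(u) + λ(v) for all u, v ∈ ℝ^{2m}. -/
open MeasureTheory Matrix

/-- The standard symplectic matrix on ℝ^{2m}, block form ((0, -I), (I, 0)). -/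
noncomputable def Ω (m : ℕ) : Matrix (Fin m ⊕ Fin m) (Fin m ⊕ Fin m) ℝ :=
  Matrix.fromBlocks 0 (-1) 1 0

/-- The standard symplectic form [u,v] = uᵀ ω v on ℝ^{2m}. -/
noncomputable def symp {m : ℕ} (u v : Fin m ⊕ Fin m → ℝ) : ℝ :=
  u ⬝ᵥ (Ω m).mulVec v

lemma symp_eq {m : ℕ} (u v : Fin m ⊕ Fin m → ℝ) :
    symp u v = ∑ i : Fin m, (u (Sum.inr i) * v (Sum.inl i) - u (Sum.inl i) * v (Sum.inr i)) := by
  simp [symp, Ω, Matrix.mulVec, dotProduct, Fintype.sum_sum_type,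
    Matrix.fromBlocks, Matrix.one_apply, Finset.mul_sum, mul_ite, Finset.sum_sub_distrib]
  ring

lemma symp_add_left {m : ℕ} (x y z : Fin m ⊕ Fin m → ℝ) :
    symp (x + y) z = symp x z + symp y z := by
  simp only [symp_eq, Pi.add_apply, ← Finset.sum_add_distrib]
  exact Finset.sum_congr rfl fun i _ => by ring

lemma symp_add_right {m : ℕ} (x y z : Fin m ⊕ Fin m → ℝ) :
    symp x (y + z) = symp x y + symp x z := by
  simp only [symp_eq, Pi.add_apply, ← Finset.sum_add_distrib]
  exact Finset.sum_congr rfl fun i _ => by ring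

lemma symp_sub_left {m : ℕ} (x y z : Fin m ⊕ Fin m → ℝ) :
    symp (x - y) z = symp x z - symp y z := by
  simp only [symp_eq, Pi.sub_apply, ← Finset.sum_sub_distrib]
  exact Finset.sum_congr rfl fun i _ => by ring

lemma symp_sub_right {m : ℕ} (x y z : Fin m ⊕ Fin m → ℝ) :
    symp x (y - z) = symp x y - symp x z := by
  simp only [symp_eq, Pi.sub_apply, ← Finset.sum_sub_distrib]
  exact Finset.sum_congr rfl fun i _ => by ring

lemma symp_neg_left {m : ℕ} (x y : Fin m ⊕ Fin m → ℝ) :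
    symp (-x) y = - symp x y := by
  simp only [symp_eq, Pi.neg_apply, ← Finset.sum_neg_distrib]
  exact Finset.sum_congr rfl fun i _ => by ring

lemma symp_neg_right {m : ℕ} (x y : Fin m ⊕ Fin m → ℝ) :
    symp x (-y) = - symp x y := by
  simp only [symp_eq, Pi.neg_apply, ← Finset.sum_neg_distrib]
  exact Finset.sum_congr rfl fun i _ => by ring

lemma symp_smul_left {m : ℕ} (r : ℝ) (x y : Fin m ⊕ Fin m → ℝ) :
    symp (r • x) y = r * symp x y := by
  simp only [symp_eq, Pi.smul_apply, smul_eq_mul, Finset.mul_sum]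
  exact Finset.sum_congr rfl fun i _ => by ring

lemma symp_smul_right {m : ℕ} (r : ℝ) (x y : Fin m ⊕ Fin m → ℝ) :
    symp x (r • y) = r * symp x y := by
  simp only [symp_eq, Pi.smul_apply, smul_eq_mul, Finset.mul_sum]
  exact Finset.sum_congr rfl fun i _ => by ring

lemma symp_self {m : ℕ} (x : Fin m ⊕ Fin m → ℝ) : symp x x = 0 := by
  simp only [symp_eq]
  exact Finset.sum_eq_zero fun i _ => by ring

lemma symp_skew {m : ℕ} (x y : Fin m ⊕ Fin m → ℝ) : symp x y = - symp y x := by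
  simp only [symp_eq, ← Finset.sum_neg_distrib]
  exact Finset.sum_congr rfl fun i _ => by ring

/-- Triangle lemma: if the three pairwise brackets around a triangle are equal,
the two ways of grouping give a relation. -/
lemma tri {m : ℕ} (lam : (Fin m ⊕ Fin m → ℝ) → ℝ)
    (hadd : ∀ ζ₁ ζ₂ : Fin m ⊕ Fin m → ℝ, symp ζ₁ ζ₂ = 0 →
      lam (ζ₁ + ζ₂) = lam ζ₁ + lam ζ₂)
    (x y z : Fin m ⊕ Fin m → ℝ) (a : ℝ)
    (hxy : symp x y = a) (hyz : symp y z = a) (hzx : symp z x = a) :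
    lam (x + y) + lam z = lam x + lam (y + z) := by
  have hxz : symp x z = -a := by rw [symp_skew, hzx]
  have h1 : symp (x + y) z = 0 := by rw [symp_add_left, hxz, hyz]; ring
  have h2 : symp x (y + z) = 0 := by rw [symp_add_right, hxy, hxz]; ring
  have e1 := hadd (x + y) z h1
  have e2 := hadd x (y + z) h2
  rw [add_assoc] at e1
  rw [e1] at e2
  linarith

lemma claimA {m : ℕ} (lam : (Fin m ⊕ Fin m → ℝ) → ℝ)
    (hadd : ∀ ζ₁ ζ₂ : Fin m ⊕ Fin m → ℝ, symp ζ₁ ζ₂ = 0 →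
      lam (ζ₁ + ζ₂) = lam ζ₁ + lam ζ₂)
    (p q r s : Fin m ⊕ Fin m → ℝ) (a : ℝ)
    (h1 : symp p q = a) (h2 : symp p r = a) (h3 : symp p s = -a)
    (h4 : symp q s = a) (h5 : symp r s = a) :
    lam (p + q) - lam q = lam (p + r) - lam r := by
  have hsp : symp s p = a := by rw [symp_skew, h3]; ring
  have T1 := tri lam hadd s p q a hsp h1 h4
  have T2 := tri lam hadd s p r a hsp h2 h5
  linarith

lemma exists_z {m : ℕ} (hm : 2 ≤ m) (u v : Fin m ⊕ Fin m → ℝ) :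
    ∃ z : Fin m ⊕ Fin m → ℝ, z ≠ 0 ∧ symp u z = 0 ∧ symp v z = 0 := by
  let F : (Fin m ⊕ Fin m → ℝ) →ₗ[ℝ] ℝ × ℝ :=
    { toFun := fun s => (symp u s, symp v s)
      map_add' := fun x y => by simp [symp_add_right, Prod.ext_iff]
      map_smul' := fun r x => by simp [symp_smul_right, Prod.ext_iff, smul_eq_mul] }
  have hker : LinearMap.ker F ≠ ⊥ := by
    intro h
    have hinj : Function.Injective F := LinearMap.ker_eq_bot.mp h
    have h1 := LinearMap.finrank_le_finrank_of_injective hinj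
    rw [Module.finrank_fintype_fun_eq_card] at h1
    simp [Fintype.card_sum, Module.finrank_prod] at h1
    omega
  obtain ⟨z, hz, hz0⟩ := (Submodule.ne_bot_iff _).mp hker
  refine ⟨z, hz0, ?_, ?_⟩
  · exact congrArg Prod.fst (LinearMap.mem_ker.mp hz)
  · exact congrArg Prod.snd (LinearMap.mem_ker.mp hz)

lemma exists_w {m : ℕ} (z : Fin m ⊕ Fin m → ℝ) (hz : z ≠ 0) :
    ∃ w : Fin m ⊕ Fin m → ℝ, symp z w ≠ 0 := by
  refine ⟨Sum.elim (fun i => z (Sum.inr i)) (fun i => - z (Sum.inl i)), ?_⟩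
  have h : symp z (Sum.elim (fun i => z (Sum.inr i)) (fun i => - z (Sum.inl i)))
      = ∑ i : Fin m, (z (Sum.inr i) ^ 2 + z (Sum.inl i) ^ 2) := by
    rw [symp_eq]
    exact Finset.sum_congr rfl fun i _ => by simp; ring
  rw [h]
  intro h0
  apply hz
  have hterm : ∀ i ∈ Finset.univ, (z (Sum.inr i) ^ 2 + z (Sum.inl i) ^ 2 : ℝ) = 0 := by
    intro i _
    have := Finset.sum_eq_zero_iff_of_nonneg (fun i _ => by positivity) |>.mp h0
    exact this i (Finset.mem_univ i)
  funext j
  cases j with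
  | inl i =>
    have := hterm i (Finset.mem_univ i)
    have h2 : z (Sum.inl i) ^ 2 = 0 := by nlinarith [sq_nonneg (z (Sum.inr i)), sq_nonneg (z (Sum.inl i))]
    simpa using pow_eq_zero_iff (n := 2) (by norm_num) |>.mp h2
  | inr i =>
    have := hterm i (Finset.mem_univ i)
    have h2 : z (Sum.inr i) ^ 2 = 0 := by nlinarith [sq_nonneg (z (Sum.inr i)), sq_nonneg (z (Sum.inl i))]
    simpa using pow_eq_zero_iff (n := 2) (by norm_num) |>.mp h2

set_option maxHeartbeats 2000000 in
theorem stmt_0 (m : ℕ) (hm : 2 ≤ m) (lam : (Fin m ⊕ Fin m → ℝ) → ℝ)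
    (hadd : ∀ ζ₁ ζ₂ : Fin m ⊕ Fin m → ℝ, symp ζ₁ ζ₂ = 0 →
      lam (ζ₁ + ζ₂) = lam ζ₁ + lam ζ₂) :
    ∀ u v : Fin m ⊕ Fin m → ℝ, lam (u + v) = lam u + lam v := by
  intro u v
  by_cases hc : symp u v = 0
  · exact hadd u v hc
  obtain ⟨z, hz0, huz, hvz⟩ := exists_z hm u v
  obtain ⟨w, hNw⟩ := exists_w z hz0
  set c : ℝ := symp u v with hc'
  set N : ℝ := symp z w with hN'
  set a : ℝ := symp u w with ha'
  set b : ℝ := symp v w with hb'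
  have hvu : symp v u = -c := by rw [symp_skew, ← hc']
  have hzu : symp z u = 0 := by rw [symp_skew, huz, neg_zero]
  have hzv : symp z v = 0 := by rw [symp_skew, hvz, neg_zero]
  have hwu : symp w u = -a := by rw [symp_skew, ← ha']
  have hwv : symp w v = -b := by rw [symp_skew, ← hb']
  have hwz : symp w z = -N := by rw [symp_skew, ← hN']
  set v₁ : Fin m ⊕ Fin m → ℝ := -u + z with hv₁
  set v₂ : Fin m ⊕ Fin m → ℝ := v - v₁ with hv₂
  set t : Fin m ⊕ Fin m → ℝ :=
    (((2*c/N)*b - 2*c)/c) • u + ((c - (2*c/N)*a)/c) • v + (2*c/N) • w with ht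
  set s₁ : Fin m ⊕ Fin m → ℝ := (-3/2 : ℝ) • v + (1/2 : ℝ) • t with hs₁
  set s₂ : Fin m ⊕ Fin m → ℝ := u - (2:ℝ) • v + (2:ℝ) • v₁ with hs₂
  set s₃ : Fin m ⊕ Fin m → ℝ := (1/2 : ℝ) • u - v + (1/2 : ℝ) • v₁ with hs₃
  have expand := And.intro trivial trivial
  have B1 : symp u v₁ = 0 := by
    simp only [hv₁, symp_add_right, symp_neg_right, symp_self, huz]; ring
  have B2 : symp (u + v₁) v₂ = 0 := by
    simp only [hv₂, hv₁, symp_add_left, symp_add_right, symp_sub_right, symp_neg_left,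
      symp_neg_right, symp_self, ← hc', huz, hzu, hvz, hzv, hvu]; ring
  have hA2 : symp v v₂ = -c := by
    simp only [hv₂, hv₁, symp_add_right, symp_sub_right, symp_neg_right,
      symp_self, hvu, hvz]; ring
  have hA3 : symp v s₁ = c := by
    simp only [hs₁, ht, symp_add_right, symp_smul_right, symp_self, ← hc', hvu, hvz, ← hb']
    field_simp
    ring
  have hA4 : symp u s₁ = -c := by
    simp only [hs₁, ht, symp_add_right, symp_smul_right, symp_self, ← hc', huz, ← ha']
    field_simp
    ring
  have hA5 : symp v₂ s₁ = -c := by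
    simp only [hs₁, ht, hv₂, hv₁, symp_add_left, symp_add_right, symp_sub_left,
      symp_neg_left, symp_smul_right, symp_self, ← hc', hvu, huz, hzu, hvz, hzv,
      ← ha', ← hb', ← hN']
    field_simp
    ring
  have hB1 : symp v₂ v = c := by
    simp only [hv₂, hv₁, symp_sub_left, symp_add_left, symp_neg_left, symp_self,
      ← hc', hvu, hzv]; ring
  have hB2 : symp v₂ t = c := by
    simp only [ht, hv₂, hv₁, symp_sub_left, symp_add_left, symp_add_right, symp_neg_left,
      symp_smul_right, symp_self, ← hc', hvu, huz, hzu, hvz, hzv, ← ha', ← hb', ← hN']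
    field_simp
    ring
  have hB3 : symp v₂ s₂ = -c := by
    simp only [hs₂, hv₂, hv₁, symp_sub_left, symp_sub_right, symp_add_left, symp_add_right,
      symp_neg_left, symp_neg_right, symp_smul_right, symp_self,
      ← hc', hvu, huz, hzu, hvz, hzv]
    ring
  have hB4 : symp v s₂ = c := by
    simp only [hs₂, hv₁, symp_sub_right, symp_add_right, symp_neg_right,
      symp_smul_right, symp_self, ← hc', hvu, hvz]
    ring
  have hB5 : symp t s₂ = c := by
    simp only [hs₂, ht, hv₁, symp_add_left, symp_add_right, symp_sub_right, symp_neg_right,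
      symp_smul_left, symp_smul_right, symp_self, ← hc', hvu, huz, hzu, hvz, hzv,
      ← ha', ← hb', ← hN', hwu, hwv, hwz]
    field_simp
    ring
  have hC2 : symp v₂ v₁ = c := by
    simp only [hv₂, hv₁, symp_sub_left, symp_add_left, symp_add_right, symp_neg_left,
      symp_neg_right, symp_self, ← hc', hvu, huz, hzu, hvz, hzv]
    ring
  have hC3 : symp v₂ s₃ = -c := by
    simp only [hs₃, hv₂, hv₁, symp_sub_left, symp_sub_right, symp_add_left, symp_add_right,
      symp_neg_left, symp_neg_right, symp_smul_right, symp_self,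
      ← hc', hvu, huz, hzu, hvz, hzv]
    ring
  have hC4 : symp t s₃ = c := by
    simp only [hs₃, ht, hv₁, symp_add_left, symp_add_right, symp_sub_right, symp_neg_right,
      symp_smul_left, symp_smul_right, symp_self, ← hc', hvu, huz, hzu, hvz, hzv,
      ← ha', ← hb', ← hN', hwu, hwv, hwz]
    field_simp
    ring
  have hC5 : symp v₁ s₃ = c := by
    simp only [hs₃, hv₁, symp_add_left, symp_add_right, symp_sub_right, symp_neg_left,
      symp_neg_right, symp_smul_right, symp_self, ← hc', hvu, huz, hzu, hvz, hzv]
    ring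
  -- R1 splitting
  have R1a : lam (u + v₁) = lam u + lam v₁ := hadd u v₁ B1
  have R1b : lam (u + v₁ + v₂) = lam (u + v₁) + lam v₂ := hadd _ _ B2
  have hsum : u + v₁ + v₂ = u + v := by rw [hv₂]; abel
  rw [hsum, R1a] at R1b
  -- the three claimA applications
  have hA := claimA lam hadd v u v₂ s₁ (-c) hvu hA2 (by rw [hA3]; ring) hA4 hA5
  have hB := claimA lam hadd v₂ v t s₂ c hB1 hB2 (by rw [hB3]) hB4 hB5
  have hC := claimA lam hadd v₂ t v₁ s₃ c hB2 hC2 (by rw [hC3]) hC4 hC5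
  have e1 : v₂ + v₁ = v := by rw [hv₂]; abel
  have e2 : v₂ + v = v + v₂ := add_comm _ _
  have e3 : v + u = u + v := add_comm _ _
  have e4 : v₂ + t = t + v₂ := add_comm _ _
  rw [e1] at hC
  rw [e2] at hB
  rw [e3] at hA
  linarith
end

section
/- Let λ : ℝ^{2m} → ℝ (m ≥ 2) be additive on symplectically orthogonal pairs, i.e., λ(ζ₁+ζ₂) = λ(ζ₁)+λ(ζ₂) whenever [ζ₁,ζ₂]=0, and additionally satisfy λ(c·ζ) = c·λ(ζ) for all scalars c ∈ ℝ and ζ ∈ ℝ^{2m} (which follows from compatibility with polynomial post-processing on single observables). Then λ is a linear functional on ℝ^{2m}, hence there exists φ ∈ ℝ^{2m} such that λ(ζ) = φ·ζ for all ζ. -/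
open MeasureTheory Matrix

/-!
Let `δ(a, b) = λ(a + b) - λ a - λ b`. If `a, b` are both orthogonal to `w, z` and
`[a, b] + [w, z] = 0`, then `(a + w) + (b + z)` and `(a + b) + (w + z)` both split into
orthogonal summands, which gives `δ(a, b) = -δ(w, z)`. Given `u, v` with `[u, v] = s ≠ 0`, the
symplectic complement of `span {u, v}` is nonzero because `m ≥ 2`, and it contains `w, z` with
`[w, z] = -s`. Comparing `(u, v)`, `(v, -u)` against `(w, z)` and `(v, u)`, `(u, -v)` against
`(z, w)`, and using that `λ` is odd, yields `δ(u, v) = -δ(u, v)`. So `λ` is additive, hence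
linear by homogeneity, hence a dot product.
-/

open LinearMap (BilinForm)

theorem Submodule.span_pair_ne_top {K V : Type*} [DivisionRing K] [AddCommGroup V] [Module K V]
    [FiniteDimensional K V] (hV : 2 < Module.finrank K V) (u v : V) :
    Submodule.span K {u, v} ≠ ⊤ := by
  classical
  intro htop
  have hle := finrank_span_finset_le_card (R := K) ({u, v} : Finset V)
  rw [Finset.coe_pair, Set.finrank, htop, finrank_top] at hle
  exact (hle.trans Finset.card_le_two).not_gt hV

namespace LinearMap.BilinForm

variable {K V : Type*} [Field K] [AddCommGroup V] [Module K V] {B : BilinForm K V} {u v : V}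

/-- The projection along `span {u, v}` onto its `B`-orthogonal complement, when `B u v ≠ 0`. -/
noncomputable def orthProjPair (B : BilinForm K V) (u v x : V) : V :=
  x - ((B v x / B v u) • u + (B u x / B u v) • v)

theorem apply_orthProjPair_left (hB : B.IsAlt) (huv : B u v ≠ 0) (x : V) :
    B u (B.orthProjPair u v x) = 0 := by
  simp [orthProjPair, hB.self_eq_zero, huv]

theorem apply_orthProjPair_right (hB : B.IsAlt) (huv : B u v ≠ 0) (x : V) :
    B v (B.orthProjPair u v x) = 0 := by
  have hvu : B v u ≠ 0 := by rw [← hB.neg_eq]; exact neg_ne_zero.mpr huv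
  simp [orthProjPair, hB.self_eq_zero, hvu]

theorem apply_orthProjPair_of_orthogonal {w : V} (hwu : B w u = 0) (hwv : B w v = 0) (x : V) :
    B w (B.orthProjPair u v x) = B w x := by
  simp [orthProjPair, hwu, hwv]

theorem mem_span_pair_of_orthProjPair_eq_zero {x : V} (hx : B.orthProjPair u v x = 0) :
    x ∈ Submodule.span K {u, v} :=
  Submodule.mem_span_pair.mpr ⟨_, _, (sub_eq_zero.mp hx).symm⟩

end LinearMap.BilinForm

section OrthoAdditive

variable {V : Type*} [AddCommGroup V] [Module ℝ V] {B : BilinForm ℝ V}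

def IsOrthoAdditive (B : BilinForm ℝ V) (lam : V → ℝ) : Prop :=
  ∀ x y, B x y = 0 → lam (x + y) = lam x + lam y

namespace IsOrthoAdditive

variable {lam : V → ℝ}

theorem map_add_add_map_add (hB : B.IsAlt) (h : IsOrthoAdditive B lam) {a b w z : V}
    (haw : B a w = 0) (haz : B a z = 0) (hbw : B b w = 0) (hbz : B b z = 0)
    (habwz : B a b + B w z = 0) :
    lam (a + b) + lam (w + z) = lam a + lam b + lam w + lam z := by
  have hwb : B w b = 0 := by rw [← hB.neg_eq, hbw, neg_zero]
  have hcross : B (a + w) (b + z) = 0 := by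
    simp only [map_add, LinearMap.add_apply, haz, hwb]; linarith
  have hsplit : B (a + b) (w + z) = 0 := by
    simp only [map_add, LinearMap.add_apply, haw, haz, hbw, hbz, add_zero]
  have := h _ _ hcross
  rw [add_add_add_comm, h _ _ hsplit, h _ _ haw, h _ _ hbz] at this
  linarith

theorem map_add_of_orthogonal_pair (hB : B.IsAlt) (h : IsOrthoAdditive B lam)
    (hneg : ∀ x, lam (-x) = -lam x) {u v w z : V}
    (huw : B u w = 0) (huz : B u z = 0) (hvw : B v w = 0) (hvz : B v z = 0)
    (hwz : B w z = -B u v) :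
    lam (u + v) = lam u + lam v := by
  have hvu : B v u = -B u v := (hB.neg_eq u v).symm
  have hzw : B z w = B u v := by rw [← hB.neg_eq, hwz, neg_neg]
  have hnu : B (-u) w = 0 ∧ B (-u) z = 0 := by simp [huw, huz]
  have hnv : B (-v) z = 0 ∧ B (-v) w = 0 := by simp [hvz, hvw]
  have k₁ := h.map_add_add_map_add hB huw huz hvw hvz (by rw [hwz]; ring)
  have k₂ := h.map_add_add_map_add hB hvw hvz hnu.1 hnu.2 (by simp [hvu, hwz])
  have k₃ := h.map_add_add_map_add hB hvz hvw huz huw (by rw [hvu, hzw]; ring)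
  have k₄ := h.map_add_add_map_add hB huz huw hnv.1 hnv.2 (by simp [hzw])
  have hvnu : lam (v + -u) = -lam (u + -v) := by rw [← hneg]; congr 1; abel
  rw [add_comm v u] at k₃
  rw [hneg, hvnu] at k₂
  rw [hneg] at k₄
  linarith

theorem map_add (hB : B.IsAlt) (h : IsOrthoAdditive B lam) (hneg : ∀ x, lam (-x) = -lam x)
    (hpair : ∀ u v, B u v ≠ 0 → ∃ w z, B u w = 0 ∧ B u z = 0 ∧ B v w = 0 ∧ B v z = 0 ∧
      B w z = -B u v)
    (u v : V) : lam (u + v) = lam u + lam v := by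
  by_cases huv : B u v = 0
  · exact h u v huv
  · obtain ⟨w, z, huw, huz, hvw, hvz, hwz⟩ := hpair u v huv
    exact h.map_add_of_orthogonal_pair hB hneg huw huz hvw hvz hwz

end IsOrthoAdditive

end OrthoAdditive

section Symplectic

variable {m : ℕ}

theorem Ω_mul_self (m : ℕ) : Ω m * Ω m = -1 := by
  simp [Ω, fromBlocks_multiply, ← fromBlocks_one, fromBlocks_neg]

noncomputable def sympForm (m : ℕ) : BilinForm ℝ (Fin m ⊕ Fin m → ℝ) :=
  Matrix.toLinearMap₂' ℝ (Ω m)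

@[simp]
theorem sympForm_apply (u v : Fin m ⊕ Fin m → ℝ) : sympForm m u v = symp u v :=
  Matrix.toLinearMap₂'_apply' _ _ _

theorem sympForm_isAlt (m : ℕ) : (sympForm m).IsAlt := by
  intro x
  simp [symp, Ω, dotProduct, Fintype.sum_sum_type, fromBlocks_mulVec, neg_mulVec, mul_comm]

theorem sympForm_neg_mulVec_self (w : Fin m ⊕ Fin m → ℝ) :
    sympForm m w (-(Ω m *ᵥ w)) = w ⬝ᵥ w := by
  rw [sympForm_apply, symp, mulVec_neg, mulVec_mulVec, Ω_mul_self, neg_mulVec, one_mulVec,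
    neg_neg]

theorem exists_sympForm_orthogonal_pair (hm : 2 ≤ m) {u v : Fin m ⊕ Fin m → ℝ}
    (huv : sympForm m u v ≠ 0) (t : ℝ) :
    ∃ w z, sympForm m u w = 0 ∧ sympForm m u z = 0 ∧ sympForm m v w = 0 ∧
      sympForm m v z = 0 ∧ sympForm m w z = t := by
  set B := sympForm m
  have hB := sympForm_isAlt m
  have hdim : 2 < Module.finrank ℝ (Fin m ⊕ Fin m → ℝ) := by simp; omega
  obtain ⟨x, hx⟩ := SetLike.exists_not_mem_of_ne_top _ (Submodule.span_pair_ne_top hdim u v)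
  set w := B.orthProjPair u v x
  have hw : w ≠ 0 := fun h => hx (BilinForm.mem_span_pair_of_orthProjPair_eq_zero h)
  have huw := BilinForm.apply_orthProjPair_left hB huv x
  have hvw := BilinForm.apply_orthProjPair_right hB huv x
  -- `-Ω w` pairs with `w` to `|w|²`, and projecting it does not change that since `w ⊥ u, v`.
  set z := B.orthProjPair u v (-(Ω m *ᵥ w))
  have hwz : B w z ≠ 0 := by
    rw [BilinForm.apply_orthProjPair_of_orthogonal (by rw [← hB.neg_eq, huw, neg_zero])
      (by rw [← hB.neg_eq, hvw, neg_zero]), sympForm_neg_mulVec_self]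
    exact dotProduct_self_eq_zero.not.mpr hw
  refine ⟨w, (t / B w z) • z, huw, ?_, hvw, ?_, ?_⟩
  · rw [map_smul, BilinForm.apply_orthProjPair_left hB huv, smul_zero]
  · rw [map_smul, BilinForm.apply_orthProjPair_right hB huv, smul_zero]
  · rw [map_smul, smul_eq_mul, div_mul_cancel₀ _ hwz]

end Symplectic

theorem stmt_3 (m : ℕ) (hm : 2 ≤ m) (lam : (Fin m ⊕ Fin m → ℝ) → ℝ)
    (hadd : ∀ ζ₁ ζ₂ : Fin m ⊕ Fin m → ℝ, symp ζ₁ ζ₂ = 0 →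
      lam (ζ₁ + ζ₂) = lam ζ₁ + lam ζ₂)
    (hsmul : ∀ (c : ℝ) (ζ : Fin m ⊕ Fin m → ℝ), lam (c • ζ) = c * lam ζ) :
    ∃ φ : Fin m ⊕ Fin m → ℝ, ∀ ζ, lam ζ = φ ⬝ᵥ ζ := by
  have hortho : IsOrthoAdditive (sympForm m) lam := fun x y h => hadd x y (by simpa using h)
  have hneg (x : Fin m ⊕ Fin m → ℝ) : lam (-x) = -lam x := by simpa using hsmul (-1) x
  let L : (Fin m ⊕ Fin m → ℝ) →ₗ[ℝ] ℝ :=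
    { toFun := lam
      map_add' := hortho.map_add (sympForm_isAlt m) hneg
        fun _ _ huv => exists_sympForm_orthogonal_pair hm huv _
      map_smul' := hsmul }
  refine ⟨(dotProductEquiv ℝ _).symm L, fun ζ => ?_⟩
  rw [← dotProductEquiv_apply_apply, LinearEquiv.apply_symm_apply]
  rfl
end
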